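/- Let 0 < t < 1. There exists a sequence γ : ℕ → ℂ such that the Hankel matrix {γ_{j+k}}_{j,k≥0} belongs to the injective tensor product ℓ¹⊗̌ℓ¹ but ∑_{k≥0} |γ_k|^t (1+k)^{3t/2 − 1} = ∞. -/

import Mathlib

/-!
The sequence is a sum of blocks with disjoint supports. With `L = 2^(m+1)` and `ζ` a primitive
`8L`-th root of unity, block `m` is `ζ^(n²) T(n)`, where
`T(n) = #{(u, v) ∈ [0, L)² | u + v + 2L = n}` is a triangle supported in `[2L, 4L)`. Expanding `T`
in the characters of order `8L` and splitting `ζ^((j+k)²) = ζ^(j²) ζ^(k²) (ζ²)^(jk)`, the Hankel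
form of the block becomes an average over `r` of `|D r|²` times bilinear forms of the `4L`-point
Fourier matrix against unimodular rescalings of `x` and `y`, where `D` is the Dirichlet kernel of
length `L`. Cauchy–Schwarz and Parseval bound each Fourier form by `(4L)^(3/2)` and give
`∑ |D r|² = 8L · L`, so the block has norm `O(L^(5/2))` in `ℓ¹ ⊗̌ ℓ¹`. With amplitudes of order
`(m+1)^(-1/t) L^(-5/2)` these norms are summable because `1/t > 1`. On the `2^m` indices
`n ∈ [5·2^m, 6·2^m)` the triangle has height at least `L/2`, so `|γ n|^t (1+n)^(3t/2-1)` is at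
least of order `1/((m+1) L)` there: each block contributes at least of order `1/(m+1)` to the
weighted sum, which therefore diverges like the harmonic series.
-/

open Filter Finset

/-- The Hankel matrix `{γ_{j+k}}` belongs to the injective tensor product `ℓ¹ ⊗̌ ℓ¹`:
the partial bilinear sums against sequences in the unit ball of `ℓ^∞` are uniformly bounded. -/
def HankelInInj (γ : ℕ → ℂ) : Prop :=
  ∃ C : ℝ, ∀ (N : ℕ) (x y : ℕ → ℂ), (∀ j, ‖x j‖ ≤ 1) → (∀ k, ‖y k‖ ≤ 1) →
    ‖∑ j ∈ Finset.range (N + 1), ∑ k ∈ Finset.range (N + 1), γ (j + k) * x j * y k‖ ≤ C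

open Complex Function

namespace IsPrimitiveRoot

variable {ζ : ℂ} {P : ℕ}

theorem conj_pow_mul_pow (hζ : IsPrimitiveRoot ζ P) (hP : P ≠ 0) (a : ℕ) :
    starRingEnd ℂ (ζ ^ a) * ζ ^ a = 1 := by
  rw [Complex.conj_mul', norm_pow, hζ.norm'_eq_one hP]
  norm_num

theorem sum_pow_mul_conj_pow (hζ : IsPrimitiveRoot ζ P) {a b : ℕ} (ha : a < P) (hb : b < P) :
    ∑ r ∈ range P, ζ ^ (r * a) * starRingEnd ℂ (ζ ^ (r * b)) = if a = b then (P : ℂ) else 0 := by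
  have hP : P ≠ 0 := by omega
  have hw : ∀ r, ζ ^ (r * a) * starRingEnd ℂ (ζ ^ (r * b)) = (ζ ^ a * starRingEnd ℂ (ζ ^ b)) ^ r :=
    fun r => by rw [mul_pow, ← map_pow, ← pow_mul, ← pow_mul, mul_comm a, mul_comm b]
  simp only [hw]
  split_ifs with hab
  · rw [hab, mul_comm, hζ.conj_pow_mul_pow hP]
    simp
  · have hw1 : ζ ^ a * starRingEnd ℂ (ζ ^ b) ≠ 1 := fun h => hab <| hζ.pow_inj ha hb <| by
      rw [← mul_one (ζ ^ a), ← hζ.conj_pow_mul_pow hP b, ← mul_assoc, h, one_mul]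
    have hwP : (ζ ^ a * starRingEnd ℂ (ζ ^ b)) ^ P = 1 := by
      rw [mul_pow, ← map_pow, ← pow_mul, ← pow_mul, pow_mul', pow_mul' ζ b, hζ.pow_eq_one]
      simp
    rw [geom_sum_eq hw1, hwP, sub_self, zero_div]

theorem sum_norm_sq_sum_pow_mul (hζ : IsPrimitiveRoot ζ P) {s : Finset ℕ}
    (hs : ∀ k ∈ s, k < P) (b : ℕ → ℂ) :
    ∑ j ∈ range P, ‖∑ k ∈ s, ζ ^ (j * k) * b k‖ ^ 2 = P * ∑ k ∈ s, ‖b k‖ ^ 2 := by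
  apply Complex.ofReal_injective
  push_cast
  simp_rw [← Complex.mul_conj', map_sum, map_mul, sum_mul_sum, mul_sum]
  rw [sum_comm]
  refine sum_congr rfl fun k hk => ?_
  rw [sum_comm]
  have hinner : ∀ l ∈ s, ∑ j ∈ range P,
      ζ ^ (j * k) * b k * (starRingEnd ℂ (ζ ^ (j * l)) * starRingEnd ℂ (b l)) =
        if k = l then P * (b k * starRingEnd ℂ (b l)) else 0 := fun l hl => by
    rw [← zero_mul (b k * starRingEnd ℂ (b l)), ← ite_mul,
      ← hζ.sum_pow_mul_conj_pow (hs k hk) (hs l hl), sum_mul]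
    exact sum_congr rfl fun j _ => by ring
  rw [sum_congr rfl hinner, sum_ite_eq, if_pos hk]

theorem norm_sum_sum_pow_mul_le (hζ : IsPrimitiveRoot ζ P) {a b : ℕ → ℂ}
    (ha : ∀ j, ‖a j‖ ≤ 1) (hb : ∀ k, ‖b k‖ ≤ 1) :
    ‖∑ j ∈ range P, ∑ k ∈ range P, ζ ^ (j * k) * a j * b k‖ ≤ P * √P := by
  set F : ℕ → ℂ := fun j => ∑ k ∈ range P, ζ ^ (j * k) * b k
  have hF : ∑ j ∈ range P, ‖F j‖ ^ 2 ≤ (P : ℝ) ^ 2 := by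
    rw [hζ.sum_norm_sq_sum_pow_mul (fun k hk => mem_range.1 hk), sq]
    gcongr
    calc ∑ k ∈ range P, ‖b k‖ ^ 2 ≤ ∑ k ∈ range P, 1 :=
          sum_le_sum fun k _ => pow_le_one₀ (norm_nonneg _) (hb k)
      _ = P := by simp
  have hCS : (∑ j ∈ range P, ‖F j‖) ^ 2 ≤ (P * √P) ^ 2 := by
    calc (∑ j ∈ range P, ‖F j‖) ^ 2 ≤ P * ∑ j ∈ range P, ‖F j‖ ^ 2 := by
          simpa using sq_sum_le_card_mul_sum_sq (s := range P) (f := fun j => ‖F j‖)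
      _ ≤ P * P ^ 2 := by gcongr
      _ = (P * √P) ^ 2 := by rw [mul_pow, Real.sq_sqrt (Nat.cast_nonneg P)]; ring
  calc ‖∑ j ∈ range P, ∑ k ∈ range P, ζ ^ (j * k) * a j * b k‖
      = ‖∑ j ∈ range P, a j * F j‖ := by
        simp only [F, mul_sum]
        exact congrArg _ (sum_congr rfl fun j _ => sum_congr rfl fun k _ => by ring)
    _ ≤ ∑ j ∈ range P, ‖F j‖ := by
        refine (norm_sum_le _ _).trans (sum_le_sum fun j _ => ?_)
        rw [norm_mul]
        exact mul_le_of_le_one_left (norm_nonneg _) (ha j)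
    _ ≤ P * √P := le_of_sq_le_sq hCS (by positivity)

end IsPrimitiveRoot

def triangleCount (L n : ℕ) : ℕ := #{p ∈ range L ×ˢ range L | p.1 + p.2 + 2 * L = n}

theorem triangleCount_eq_sum (L n : ℕ) :
    (triangleCount L n : ℂ) = ∑ u ∈ range L, ∑ v ∈ range L, if u + v + 2 * L = n then 1 else 0 := by
  rw [triangleCount, card_filter, ← sum_product']
  push_cast
  rfl

theorem triangleCount_eq_zero_of_lt {L n : ℕ} (h : n < 2 * L) : triangleCount L n = 0 := by
  rw [triangleCount, card_eq_zero, filter_eq_empty_iff]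
  omega

theorem triangleCount_eq_zero_of_le {L n : ℕ} (h : 4 * L ≤ n) : triangleCount L n = 0 := by
  rw [triangleCount, card_eq_zero, filter_eq_empty_iff]
  simp only [mem_product, mem_range]
  omega

theorem le_triangleCount {L i : ℕ} (hi : i < L) : i + 1 ≤ triangleCount L (2 * L + i) := by
  have := card_le_card_of_injOn (s := range (i + 1))
    (t := {p ∈ range L ×ˢ range L | p.1 + p.2 + 2 * L = 2 * L + i}) (fun u => (u, i - u))
    (fun u hu => by simp only [coe_range, Set.mem_Iio] at hu; simp; omega)
    (fun u _ v _ huv => congrArg Prod.fst huv)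
  simpa [triangleCount] using this

theorem triangleCount_eq_fourier {ζ : ℂ} {P L n : ℕ} (hζ : IsPrimitiveRoot ζ P) (hP : 4 * L ≤ P)
    (hn : n < P) :
    (triangleCount L n : ℂ) = (P : ℂ)⁻¹ * ∑ r ∈ range P,
      (∑ u ∈ range L, ζ ^ (r * u)) ^ 2 * ζ ^ (r * (2 * L)) * starRingEnd ℂ (ζ ^ (r * n)) := by
  have hP0 : (P : ℂ) ≠ 0 := by norm_cast; omega
  rw [triangleCount_eq_sum, mul_sum]
  simp_rw [sq, sum_mul_sum, sum_mul, mul_sum]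
  symm
  rw [sum_comm]
  refine sum_congr rfl fun u hu => ?_
  rw [sum_comm]
  refine sum_congr rfl fun v hv => ?_
  rw [mem_range] at hu hv
  have hsum := hζ.sum_pow_mul_conj_pow (a := u + v + 2 * L) (by omega) hn
  simp only [mul_add, pow_add] at hsum
  rw [← mul_sum, hsum]
  split_ifs <;> simp [hP0]

def HankelBound (γ : ℕ → ℂ) (C : ℝ) : Prop :=
  ∀ (N : ℕ) (x y : ℕ → ℂ), (∀ j, ‖x j‖ ≤ 1) → (∀ k, ‖y k‖ ≤ 1) →
    ‖∑ j ∈ range (N + 1), ∑ k ∈ range (N + 1), γ (j + k) * x j * y k‖ ≤ C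

theorem HankelBound.of_eq_zero_of_le {γ : ℕ → ℂ} {J : ℕ} {C : ℝ} (hγ : ∀ n, J ≤ n → γ n = 0)
    (hC : ∀ x y : ℕ → ℂ, (∀ j, ‖x j‖ ≤ 1) → (∀ k, ‖y k‖ ≤ 1) →
      ‖∑ j ∈ range J, ∑ k ∈ range J, γ (j + k) * x j * y k‖ ≤ C) :
    HankelBound γ C := by
  classical
  intro N x y hx hy
  have restrict : ∀ F : ℕ → ℂ, (∀ k, J ≤ k → F k = 0) →
      ∑ k ∈ range (N + 1), F k = ∑ k ∈ range J, if k ∈ range (N + 1) then F k else 0 := by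
    intro F hF
    rw [sum_ite_mem, eq_comm]
    refine sum_subset inter_subset_right fun k hk hkJ => hF k ?_
    simp_all
  set x' : ℕ → ℂ := fun j => if j ∈ range (N + 1) then x j else 0
  set y' : ℕ → ℂ := fun k => if k ∈ range (N + 1) then y k else 0
  have hx' : ∀ j, ‖x' j‖ ≤ 1 := fun j => by dsimp only [x']; split_ifs <;> simp [hx]
  have hy' : ∀ k, ‖y' k‖ ≤ 1 := fun k => by dsimp only [y']; split_ifs <;> simp [hy]
  convert hC x' y' hx' hy' using 2
  rw [restrict _ fun j hj => sum_eq_zero fun k _ => by simp [hγ (j + k) (by omega)]]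
  refine sum_congr rfl fun j _ => ?_
  rw [restrict _ fun k hk => by simp [hγ (j + k) (by omega)]]
  split_ifs with hj
  · exact sum_congr rfl fun k _ => by simp only [x', y', if_pos hj]; split_ifs <;> simp
  · simp only [x', if_neg hj, mul_zero, zero_mul, sum_const_zero]

theorem HankelBound.nonneg {γ : ℕ → ℂ} {C : ℝ} (h : HankelBound γ C) : 0 ≤ C := by
  simpa using h 0 0 0 (by simp) (by simp)

theorem HankelBound.const_mul {γ : ℕ → ℂ} {C : ℝ} (h : HankelBound γ C) (c : ℂ) :
    HankelBound (fun n => c * γ n) (‖c‖ * C) := fun N x y hx hy => by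
  calc _ = ‖c * ∑ j ∈ range (N + 1), ∑ k ∈ range (N + 1), γ (j + k) * x j * y k‖ := by
        simp only [mul_sum, mul_assoc]
    _ ≤ ‖c‖ * C := by rw [norm_mul]; gcongr; exact h N x y hx hy

theorem hankelInInj_sum_range {β : ℕ → ℕ → ℂ} {C : ℕ → ℝ} (hβ : ∀ m n, n ≤ m → β m n = 0)
    (hC : ∀ m, HankelBound (β m) (C m)) (hsum : Summable C) :
    HankelInInj fun n => ∑ m ∈ range n, β m n := by
  refine ⟨∑' m, C m, fun N x y hx hy => ?_⟩
  have hextend : ∀ j ∈ range (N + 1), ∀ k ∈ range (N + 1),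
      ∑ m ∈ range (j + k), β m (j + k) = ∑ m ∈ range (2 * N + 1), β m (j + k) := by
    intro j hj k hk
    rw [mem_range] at hj hk
    exact sum_subset (range_subset_range.2 (by omega)) fun m _ hm => hβ m _ (by simpa using hm)
  calc _ = ‖∑ m ∈ range (2 * N + 1), ∑ j ∈ range (N + 1), ∑ k ∈ range (N + 1),
        β m (j + k) * x j * y k‖ := by
        refine congrArg _ (Eq.trans (sum_congr rfl fun j hj => sum_congr rfl fun k hk => ?_)
          ((sum_congr rfl fun j _ => sum_comm).trans sum_comm))
        rw [← sum_mul, ← sum_mul, ← hextend j hj k hk]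
    _ ≤ ∑ m ∈ range (2 * N + 1), C m :=
        (norm_sum_le _ _).trans (sum_le_sum fun m _ => hC m N x y hx hy)
    _ ≤ ∑' m, C m := hsum.sum_le_tsum _ fun m _ => (hC m).nonneg

theorem sum_sum_chirp_triangleCount_eq {ζ : ℂ} {L : ℕ} (hζ : IsPrimitiveRoot ζ (8 * L))
    (x y : ℕ → ℂ) :
    ∑ j ∈ range (4 * L), ∑ k ∈ range (4 * L), ζ ^ (j + k) ^ 2 * triangleCount L (j + k) * x j * y k
      = ((8 * L : ℕ) : ℂ)⁻¹ * ∑ r ∈ range (8 * L),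
        (∑ u ∈ range L, ζ ^ (r * u)) ^ 2 * ζ ^ (r * (2 * L)) *
          ∑ j ∈ range (4 * L), ∑ k ∈ range (4 * L), (ζ ^ 2) ^ (j * k) *
            (ζ ^ j ^ 2 * starRingEnd ℂ (ζ ^ (r * j)) * x j) *
            (ζ ^ k ^ 2 * starRingEnd ℂ (ζ ^ (r * k)) * y k) := by
  have hpoint : ∀ j ∈ range (4 * L), ∀ k ∈ range (4 * L),
      ζ ^ (j + k) ^ 2 * triangleCount L (j + k) * x j * y k = ∑ r ∈ range (8 * L),
        ((8 * L : ℕ) : ℂ)⁻¹ * ((∑ u ∈ range L, ζ ^ (r * u)) ^ 2 * ζ ^ (r * (2 * L)) *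
          ((ζ ^ 2) ^ (j * k) * (ζ ^ j ^ 2 * starRingEnd ℂ (ζ ^ (r * j)) * x j) *
            (ζ ^ k ^ 2 * starRingEnd ℂ (ζ ^ (r * k)) * y k))) := by
    intro j hj k hk
    rw [mem_range] at hj hk
    have hchirp : ζ ^ (j + k) ^ 2 = ζ ^ j ^ 2 * ζ ^ k ^ 2 * (ζ ^ 2) ^ (j * k) := by
      rw [← pow_mul, ← pow_add, ← pow_add]; ring_nf
    rw [triangleCount_eq_fourier hζ (by omega) (by omega)]
    simp only [mul_sum, sum_mul]
    refine sum_congr rfl fun r _ => ?_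
    rw [hchirp, mul_add, pow_add, map_mul]
    ring
  rw [sum_congr rfl fun j hj => sum_congr rfl (hpoint j hj), mul_sum]
  simp only [mul_sum]
  exact (sum_congr rfl fun j _ => sum_comm).trans sum_comm

theorem hankelBound_chirp_triangleCount {ζ : ℂ} {L : ℕ} (hL : 0 < L)
    (hζ : IsPrimitiveRoot ζ (8 * L)) :
    HankelBound (fun n => ζ ^ n ^ 2 * triangleCount L n) (L * (4 * L * √(4 * L))) := by
  refine HankelBound.of_eq_zero_of_le (J := 4 * L)
    (fun n hn => by simp [triangleCount_eq_zero_of_le hn]) fun x y hx hy => ?_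
  have hζ1 : ‖ζ‖ = 1 := hζ.norm'_eq_one (by omega)
  have hfourier : ∀ r, ‖∑ j ∈ range (4 * L), ∑ k ∈ range (4 * L), (ζ ^ 2) ^ (j * k) *
      (ζ ^ j ^ 2 * starRingEnd ℂ (ζ ^ (r * j)) * x j) *
      (ζ ^ k ^ 2 * starRingEnd ℂ (ζ ^ (r * k)) * y k)‖ ≤ 4 * L * √(4 * L) := fun r => by
    have hζ2 : IsPrimitiveRoot (ζ ^ 2) (4 * L) := hζ.pow (by omega) (by ring)
    exact_mod_cast hζ2.norm_sum_sum_pow_mul_le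
      (a := fun j => ζ ^ j ^ 2 * starRingEnd ℂ (ζ ^ (r * j)) * x j)
      (b := fun k => ζ ^ k ^ 2 * starRingEnd ℂ (ζ ^ (r * k)) * y k)
      (fun j => by simpa [hζ1] using hx j) (fun k => by simpa [hζ1] using hy k)
  have hdirichlet : ∑ r ∈ range (8 * L), ‖∑ u ∈ range L, ζ ^ (r * u)‖ ^ 2 = 8 * L * L := by
    simpa using hζ.sum_norm_sq_sum_pow_mul (s := range L) (fun k hk => by simp at hk; omega) 1
  rw [sum_sum_chirp_triangleCount_eq hζ, norm_mul, norm_inv, Complex.norm_natCast]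
  calc _ ≤ ((8 * L : ℕ) : ℝ)⁻¹ * ∑ r ∈ range (8 * L),
        ‖∑ u ∈ range L, ζ ^ (r * u)‖ ^ 2 * (4 * L * √(4 * L)) := by
        gcongr
        refine (norm_sum_le _ _).trans (sum_le_sum fun r _ => ?_)
        rw [norm_mul, norm_mul, norm_pow, norm_pow, hζ1, one_pow, mul_one]
        gcongr
        exact hfourier r
    _ = L * (4 * L * √(4 * L)) := by
        rw [← sum_mul, hdirichlet]
        push_cast
        field_simp

theorem Real.mul_rpow_three_halves_sub_one {a x : ℝ} (t : ℝ) (ha : 0 ≤ a) (hx : 0 < x) :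
    a ^ t * x ^ (3 * t / 2 - 1) = (a * x * √x) ^ t / x := by
  have hx32 : x * √x = x ^ (3 / 2 : ℝ) := by
    rw [Real.sqrt_eq_rpow, ← Real.rpow_one_add' hx.le (by norm_num)]; norm_num
  rw [Real.rpow_sub_one hx.ne', mul_assoc, Real.mul_rpow ha (by positivity), hx32,
    ← Real.rpow_mul hx.le, mul_div_assoc]
  ring_nf

theorem summable_natCast_add_one_rpow_neg_inv {t : ℝ} (ht0 : 0 < t) (ht1 : t < 1) :
    Summable fun m : ℕ => ((m : ℝ) + 1) ^ (-1 / t) := by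
  have h : Summable fun m : ℕ => (m : ℝ) ^ (-1 / t) := by
    rw [Real.summable_nat_rpow, div_lt_iff₀ ht0]
    linarith
  exact_mod_cast (summable_nat_add_iff 1).2 h

theorem not_summable_of_pairwise_disjoint {f : ℕ → ℝ} (hf : ∀ n, 0 ≤ f n) {B : ℕ → Finset ℕ}
    (hB : Pairwise (Disjoint on B)) (hg : ¬ Summable fun m => ∑ n ∈ B m, f n) : ¬ Summable f := by
  classical
  refine fun hs => hg <| summable_of_sum_range_le (c := ∑' n, f n)
    (fun m => sum_nonneg fun n _ => hf n) fun M => ?_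
  rw [← sum_biUnion (hB.set_pairwise _)]
  exact hs.sum_le_tsum _ fun n _ => hf n

theorem not_summable_one_div_mul_natCast_add_one {c : ℝ} (hc : 0 < c) :
    ¬ Summable fun m : ℕ => 1 / (c * (m + 1)) := by
  refine fun h => Real.not_summable_one_div_natCast <| (summable_nat_add_iff 1).1 ?_
  refine (h.mul_left c).congr fun m => ?_
  push_cast
  field_simp

noncomputable def chirpBlock (m n : ℕ) : ℂ :=
  exp (2 * Real.pi * I / (8 * 2 ^ (m + 1) : ℕ)) ^ n ^ 2 * triangleCount (2 ^ (m + 1)) n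

noncomputable def blockAmplitude (t : ℝ) (m : ℕ) : ℝ :=
  ((m : ℝ) + 1) ^ (-1 / t) / (2 ^ (m + 1) * (4 * 2 ^ (m + 1) * √(4 * 2 ^ (m + 1))))

noncomputable def hankelExample (t : ℝ) (n : ℕ) : ℂ :=
  ∑ m ∈ range n, (blockAmplitude t m : ℂ) * chirpBlock m n

theorem blockAmplitude_nonneg (t : ℝ) (m : ℕ) : 0 ≤ blockAmplitude t m := by
  unfold blockAmplitude
  positivity

theorem hankelBound_chirpBlock (m : ℕ) :
    HankelBound (chirpBlock m) (2 ^ (m + 1) * (4 * 2 ^ (m + 1) * √(4 * 2 ^ (m + 1)))) := by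
  have := hankelBound_chirp_triangleCount (L := 2 ^ (m + 1)) (by positivity)
    (Complex.isPrimitiveRoot_exp _ (by positivity))
  convert this using 1
  · rfl
  · push_cast; rfl

theorem hankelBound_blockAmplitude_mul_chirpBlock (t : ℝ) (m : ℕ) :
    HankelBound (fun n => (blockAmplitude t m : ℂ) * chirpBlock m n)
      (((m : ℝ) + 1) ^ (-1 / t)) := by
  convert (hankelBound_chirpBlock m).const_mul (blockAmplitude t m) using 1
  rw [Complex.norm_real, Real.norm_of_nonneg (blockAmplitude_nonneg t m), blockAmplitude,
    div_mul_cancel₀ _ (by positivity)]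

theorem hankelInInj_hankelExample {t : ℝ} (ht0 : 0 < t) (ht1 : t < 1) :
    HankelInInj (hankelExample t) := by
  refine hankelInInj_sum_range (fun m n hn => ?_) (hankelBound_blockAmplitude_mul_chirpBlock t)
    (summable_natCast_add_one_rpow_neg_inv ht0 ht1)
  have : n < 2 * 2 ^ (m + 1) := by have := Nat.lt_two_pow_self (n := m); rw [pow_succ]; omega
  simp [chirpBlock, triangleCount_eq_zero_of_lt this]

theorem norm_chirpBlock (m n : ℕ) : ‖chirpBlock m n‖ = triangleCount (2 ^ (m + 1)) n := by
  rw [chirpBlock, norm_mul, norm_pow, (Complex.isPrimitiveRoot_exp _ (by positivity)).norm'_eq_one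
    (by positivity), one_pow, one_mul, Complex.norm_natCast]

theorem hankelExample_eq_of_mem_Ico (t : ℝ) {m n : ℕ} (hn : n ∈ Ico (2 ^ (m + 2)) (2 ^ (m + 3))) :
    hankelExample t n = blockAmplitude t m * chirpBlock m n := by
  rw [mem_Ico] at hn
  refine sum_eq_single_of_mem m ?_ fun k _ hkm => ?_
  · have := Nat.lt_two_pow_self (n := m + 2); simp only [mem_range]; omega
  · suffices triangleCount (2 ^ (k + 1)) n = 0 by simp [chirpBlock, this]
    rcases lt_or_gt_of_ne hkm with hk | hk
    · refine triangleCount_eq_zero_of_le ?_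
      have : 2 ^ (k + 3) ≤ 2 ^ (m + 2) := Nat.pow_le_pow_right (by norm_num) (by omega)
      have : 4 * 2 ^ (k + 1) = 2 ^ (k + 3) := by ring
      omega
    · refine triangleCount_eq_zero_of_lt ?_
      have : 2 ^ (m + 3) ≤ 2 ^ (k + 2) := Nat.pow_le_pow_right (by norm_num) (by omega)
      have : 2 * 2 ^ (k + 1) = 2 ^ (k + 2) := by ring
      omega

theorem blockAmplitude_mul_two_pow_le_norm_hankelExample (t : ℝ) {m n : ℕ}
    (hn : n ∈ Ico (5 * 2 ^ m) (6 * 2 ^ m)) :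
    blockAmplitude t m * 2 ^ m ≤ ‖hankelExample t n‖ := by
  rw [mem_Ico] at hn
  have hpow : 2 ^ (m + 1) = 2 * 2 ^ m ∧ 2 ^ (m + 2) = 4 * 2 ^ m ∧ 2 ^ (m + 3) = 8 * 2 ^ m := by
    refine ⟨?_, ?_, ?_⟩ <;> ring
  have hcount : (2 : ℝ) ^ m ≤ triangleCount (2 ^ (m + 1)) n := by
    have := le_triangleCount (L := 2 ^ (m + 1)) (i := n - 2 * 2 ^ (m + 1)) (by omega)
    rw [show 2 * 2 ^ (m + 1) + (n - 2 * 2 ^ (m + 1)) = n by omega] at this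
    exact_mod_cast (show 2 ^ m ≤ n - 2 * 2 ^ (m + 1) + 1 by omega).trans this
  rw [hankelExample_eq_of_mem_Ico t (m := m) (by rw [mem_Ico]; omega), norm_mul, norm_chirpBlock,
    Complex.norm_real, Real.norm_of_nonneg (blockAmplitude_nonneg t m)]
  exact mul_le_mul_of_nonneg_left hcount (blockAmplitude_nonneg t m)

theorem le_norm_hankelExample_mul_rpow {t : ℝ} (ht0 : 0 < t) (ht1 : t ≤ 1) {m n : ℕ}
    (hn : n ∈ Ico (5 * 2 ^ m) (6 * 2 ^ m)) :
    1 / (128 * ((m : ℝ) + 1) * 2 ^ m) ≤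
      ‖hankelExample t n‖ ^ t * (1 + (n : ℝ)) ^ (3 * t / 2 - 1) := by
  have hnorm := blockAmplitude_mul_two_pow_le_norm_hankelExample t hn
  rw [mem_Ico] at hn
  set x : ℝ := 1 + n
  have hx : 2 * 2 ^ m ≤ x ∧ x ≤ 8 * 2 ^ m := by
    have hn' : (5 * 2 ^ m : ℝ) ≤ n ∧ (n : ℝ) + 1 ≤ 6 * 2 ^ m := by
      constructor <;> exact_mod_cast (by omega)
    constructor <;> linarith [pow_pos (two_pos (α := ℝ)) m]
  have hkey : ((m : ℝ) + 1) ^ (-1 / t) / 16 ≤ ‖hankelExample t n‖ * x * √x := by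
    have hsqrt : √(4 * 2 ^ (m + 1) : ℝ) = 2 * √(2 * 2 ^ m) := by
      rw [pow_succ, show (4 : ℝ) * (2 ^ m * 2) = 2 ^ 2 * (2 * 2 ^ m) by ring,
        Real.sqrt_mul (by positivity), Real.sqrt_sq two_pos.le]
    calc ((m : ℝ) + 1) ^ (-1 / t) / 16
        = blockAmplitude t m * 2 ^ m * (2 * 2 ^ m) * √(2 * 2 ^ m) := by
          rw [blockAmplitude, hsqrt, pow_succ]
          field_simp
          ring
      _ ≤ ‖hankelExample t n‖ * x * √x := by
          gcongr <;> exact hx.1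
  have hwt : (((m : ℝ) + 1) ^ (-1 / t)) ^ t = ((m : ℝ) + 1)⁻¹ := by
    rw [← Real.rpow_mul (by positivity), div_mul_cancel₀ _ ht0.ne', Real.rpow_neg_one]
  have h16 : (16 : ℝ) ^ t ≤ 16 := by
    simpa using Real.rpow_le_rpow_of_exponent_le (by norm_num : (1 : ℝ) ≤ 16) ht1
  rw [Real.mul_rpow_three_halves_sub_one t (norm_nonneg _) (by positivity)]
  calc 1 / (128 * ((m : ℝ) + 1) * 2 ^ m) = ((m + 1 : ℝ)⁻¹ / 16) / (8 * 2 ^ m) := by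
        field_simp; ring
    _ ≤ (((m : ℝ) + 1) ^ (-1 / t) / 16) ^ t / (8 * 2 ^ m) := by
        rw [Real.div_rpow (by positivity) (by norm_num), hwt]
        gcongr
    _ ≤ (‖hankelExample t n‖ * x * √x) ^ t / x := by
        gcongr
        exact hx.2

theorem le_sum_Ico_norm_hankelExample_mul_rpow {t : ℝ} (ht0 : 0 < t) (ht1 : t ≤ 1) (m : ℕ) :
    1 / (128 * ((m : ℝ) + 1)) ≤ ∑ n ∈ Ico (5 * 2 ^ m) (6 * 2 ^ m),
      ‖hankelExample t n‖ ^ t * (1 + (n : ℝ)) ^ (3 * t / 2 - 1) := by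
  have := card_nsmul_le_sum (Ico (5 * 2 ^ m) (6 * 2 ^ m)) _ _
    fun n hn => le_norm_hankelExample_mul_rpow ht0 ht1 hn
  rw [Nat.card_Ico, show 6 * 2 ^ m - 5 * 2 ^ m = 2 ^ m by omega, nsmul_eq_mul] at this
  refine le_of_eq_of_le ?_ this
  push_cast
  field_simp

theorem pairwise_disjoint_Ico_five_mul_two_pow :
    Pairwise (Disjoint on fun m : ℕ => Ico (5 * 2 ^ m) (6 * 2 ^ m)) := by
  intro m k hmk
  wlog h : m < k generalizing m k
  · exact (this hmk.symm (by omega)).symm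
  have : 2 ^ (m + 1) ≤ 2 ^ k := Nat.pow_le_pow_right (by norm_num) h
  simp only [onFun, disjoint_left, mem_Ico]
  rw [pow_succ] at this
  omega

theorem hankel_inj_weighted_not_summable (t : ℝ) (ht0 : 0 < t) (ht1 : t < 1) :
    ∃ γ : ℕ → ℂ, HankelInInj γ ∧
      ¬ Summable fun k : ℕ => ‖γ k‖ ^ t * (1 + (k : ℝ)) ^ (3 * t / 2 - 1) := by
  refine ⟨hankelExample t, hankelInInj_hankelExample ht0 ht1, ?_⟩
  refine not_summable_of_pairwise_disjoint (fun n => by positivity)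
    pairwise_disjoint_Ico_five_mul_two_pow fun h => ?_
  exact not_summable_one_div_mul_natCast_add_one (by norm_num : (0 : ℝ) < 128) <|
    Summable.of_nonneg_of_le (fun m => by positivity)
      (le_sum_Ico_norm_hankelExample_mul_rpow ht0 ht1.le) h
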